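/- Let m = 2p + 1 ≥ 3 be an odd integer, ζ := exp(πi/m), and let Ŵ⁺ be the group with presentation ⟨z, s₀, s₁, s_m | z² = s₀² = s₁² = s_m² = (s₁s_m)^m = 1, (s₀s₁)² = (s₀s_m)² = z, z s_i = s_i z for i ∈ {0,1,m}⟩. For ε, δ ∈ {1, −1} and 1 ≤ j ≤ p, the assignment z ↦ ε·I₂, s₀ ↦ diag(δ, εδ), s₁ ↦ [[0, ζ^{2j}], [ζ^{−2j}, 0]], s_m ↦ [[0,1],[1,0]] respects the defining relations and hence extends to a group homomorphism Ŵ⁺ → GL₂(ℂ); likewise the assignment z ↦ −I₂, s₀ ↦ diag(1, −1), s₁ ↦ [[0,1],[1,0]], s_m ↦ [[0,1],[1,0]] extends to a group homomorphism Ŵ⁺ → GL₂(ℂ). Each of the resulting 4p + 1 two-dimensional complex representations of Ŵ⁺ is irreducible, and they are pairwise non-isomorphic. -/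

import Mathlib

/-- Generators of the double covering of `W = ℤ₂ × D_{2m}`: the central element `z`
and the lifted reflections `s₀`, `s₁`, `s_m`. -/
inductive Gen : Type
  | z | s0 | s1 | sm
deriving DecidableEq

open FreeGroup

/-- Relators of the positive double covering `Ŵ⁺` of `ℤ₂ × D_{2m}` for odd `m`. -/
def relsOddPos (m : ℕ) : Set (FreeGroup Gen) :=
  { (of Gen.z) ^ 2, (of Gen.s0) ^ 2, (of Gen.s1) ^ 2, (of Gen.sm) ^ 2,
    (of Gen.s1 * of Gen.sm) ^ m,
    (of Gen.s0 * of Gen.s1) ^ 2 * (of Gen.z)⁻¹,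
    (of Gen.s0 * of Gen.sm) ^ 2 * (of Gen.z)⁻¹,
    of Gen.z * of Gen.s0 * (of Gen.z)⁻¹ * (of Gen.s0)⁻¹,
    of Gen.z * of Gen.s1 * (of Gen.z)⁻¹ * (of Gen.s1)⁻¹,
    of Gen.z * of Gen.sm * (of Gen.z)⁻¹ * (of Gen.sm)⁻¹ }

/-- `ζ = exp(πi/m)`. -/
noncomputable def zeta (m : ℕ) : ℂ := Complex.exp (Real.pi * Complex.I / m)

/-- The matrix assignment on the generators: `none` is the special representation `Y₀`
(`z ↦ −I₂`, `s₀ ↦ diag(1,−1)`, `s₁, s_m ↦ [[0,1],[1,0]]`), and `some (ε, δ, j)` is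
the representation `Y_j(ε, δ)` (`z ↦ ε·I₂`, `s₀ ↦ diag(δ, εδ)`,
`s₁ ↦ [[0, ζ^{2j}], [ζ^{−2j}, 0]]`, `s_m ↦ [[0,1],[1,0]]`). -/
noncomputable def assign (m : ℕ) : Option (ℂ × ℂ × ℕ) → Gen → Matrix (Fin 2) (Fin 2) ℂ
  | none, Gen.z => -(1 : Matrix (Fin 2) (Fin 2) ℂ)
  | none, Gen.s0 => !![1, 0; 0, -1]
  | none, Gen.s1 => !![0, 1; 1, 0]
  | none, Gen.sm => !![0, 1; 1, 0]
  | some (ε, _, _), Gen.z => ε • (1 : Matrix (Fin 2) (Fin 2) ℂ)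
  | some (ε, δ, _), Gen.s0 => !![δ, 0; 0, ε * δ]
  | some (_, _, j), Gen.s1 => !![0, zeta m ^ (2 * j); (zeta m ^ (2 * j))⁻¹, 0]
  | some _, Gen.sm => !![0, 1; 1, 0]

/-- The admissible parameters: either the special representation, or `ε, δ ∈ {1, −1}`
and `1 ≤ j ≤ p`. -/
def ValidParam (p : ℕ) : Option (ℂ × ℂ × ℕ) → Prop
  | none => True
  | some (ε, δ, j) => (ε = 1 ∨ ε = -1) ∧ (δ = 1 ∨ δ = -1) ∧ 1 ≤ j ∧ j ≤ p

/-- `φ` takes the prescribed matrix values on the generators. -/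
def Extends {rels : Set (FreeGroup Gen)}
    (φ : PresentedGroup rels →* (Matrix (Fin 2) (Fin 2) ℂ)ˣ)
    (M : Gen → Matrix (Fin 2) (Fin 2) ℂ) : Prop :=
  ∀ g : Gen, (φ (PresentedGroup.of g) : Matrix (Fin 2) (Fin 2) ℂ) = M g

/-- Irreducibility of a two-dimensional matrix representation: the only invariant
subspaces of `ℂ²` are `⊥` and `⊤`. -/
def IrredMat {G : Type*} [Group G] (φ : G →* (Matrix (Fin 2) (Fin 2) ℂ)ˣ) : Prop :=
  ∀ U : Submodule ℂ (Fin 2 → ℂ),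
    (∀ g : G, ∀ x ∈ U, ((φ g : Matrix (Fin 2) (Fin 2) ℂ)).mulVec x ∈ U) → U = ⊥ ∨ U = ⊤

/-- Isomorphism of matrix representations: simultaneous conjugation. -/
def MatIso {G : Type*} [Group G] (φ ψ : G →* (Matrix (Fin 2) (Fin 2) ℂ)ˣ) : Prop :=
  ∃ S : (Matrix (Fin 2) (Fin 2) ℂ)ˣ, ∀ g : G, φ g = S * ψ g * S⁻¹

/-!
All `4p + 1` assignments have the shape `z ↦ e`, `s₀ ↦ diag(d, ed)`, `s₁ ↦ [[0, a], [a⁻¹, 0]]`,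
`s_m ↦ [[0, 1], [1, 0]]`, so that `s₁s_m ↦ diag(a, a⁻¹)`; the relations then reduce to
`e² = d² = 1` and `aᵐ = 1`. A subspace of `ℂ²` stable under a diagonal matrix with distinct
eigenvalues is spanned by coordinate vectors, and the swap `s_m` exchanges these, so the
representation is irreducible as soon as `s₁s_m` (for `Y_j`, where `a = ζ^{2j} ≠ ζ^{-2j}`) or
`s₀` (for `Y₀`) has distinct eigenvalues. The traces of `z`, `s₁s_m` and `s₀s₁s_m`, namely `2e`,
`a + a⁻¹` and `d(a + e a⁻¹)`, are conjugation invariants, and they determine the parameters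
because `ζ²` is a primitive `m`-th root of unity with `m` odd.
-/

open Matrix

theorem add_mul_inv_ne_zero_of_pow_four_ne_one {K : Type*} [Field K] {a e : K} (ha0 : a ≠ 0)
    (ha : a ^ 4 ≠ 1) (he : e * e = 1) : a + e * a⁻¹ ≠ 0 := by
  intro h
  have hsq : a ^ 2 = -e := by
    field_simp at h
    linear_combination h
  exact ha (by rw [show a ^ 4 = a ^ 2 * a ^ 2 by ring, hsq, neg_mul_neg, he])

namespace IsPrimitiveRoot

variable {K : Type*} [Field K] {ω : K}

theorem pow_pow_four_ne_one {m j : ℕ} (hω : IsPrimitiveRoot ω m) (hm : Odd m) (hj : ¬ m ∣ j) :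
    (ω ^ j) ^ 4 ≠ 1 := by
  rw [← pow_mul, Ne, hω.pow_eq_one_iff_dvd]
  exact fun h => hj (((Nat.coprime_two_right.2 hm).pow_right 2).dvd_of_dvd_mul_right h)

variable {p j : ℕ}

theorem pow_add_mul_inv_ne_zero (hω : IsPrimitiveRoot ω (2 * p + 1)) {e : K} (hj1 : 1 ≤ j)
    (hjp : j ≤ p) (he : e * e = 1) : ω ^ j + e * (ω ^ j)⁻¹ ≠ 0 :=
  add_mul_inv_ne_zero_of_pow_four_ne_one (pow_ne_zero j (hω.ne_zero (by omega)))
    (hω.pow_pow_four_ne_one (odd_two_mul_add_one p) (Nat.not_dvd_of_pos_of_lt hj1 (by omega))) he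

theorem eq_of_pow_add_inv_eq (hω : IsPrimitiveRoot ω (2 * p + 1)) {j' : ℕ} (hj : j ≤ p)
    (hj' : j' ≤ p) (h : ω ^ j + (ω ^ j)⁻¹ = ω ^ j' + (ω ^ j')⁻¹) : j = j' := by
  have h0 : ω ≠ 0 := hω.ne_zero (by omega)
  have hfac : (ω ^ j - ω ^ j') * (ω ^ j * ω ^ j' - 1) = 0 := by
    field_simp at h
    linear_combination h
  rcases mul_eq_zero.1 hfac with heq | hinv
  · exact hω.pow_inj (by omega) (by omega) (sub_eq_zero.1 heq)
  · rw [← pow_add, sub_eq_zero, hω.pow_eq_one_iff_dvd] at hinv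
    have := Nat.eq_zero_of_dvd_of_lt hinv (by omega)
    omega

end IsPrimitiveRoot

theorem isPrimitiveRoot_zeta_sq {m : ℕ} (hm : m ≠ 0) : IsPrimitiveRoot (zeta m ^ 2) m := by
  convert Complex.isPrimitiveRoot_exp m hm using 1
  rw [zeta, ← Complex.exp_nat_mul]
  congr 1
  push_cast
  ring

theorem relsOddPos_lift_eq_one {G : Type*} [Group G] {m : ℕ} (f : Gen → G)
    (hsq : ∀ g, f g ^ 2 = 1) (hm : (f .s1 * f .sm) ^ m = 1)
    (h01 : (f .s0 * f .s1) ^ 2 = f .z) (h0m : (f .s0 * f .sm) ^ 2 = f .z)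
    (hz : ∀ g, Commute (f .z) (f g)) :
    ∀ r ∈ relsOddPos m, FreeGroup.lift f r = 1 := by
  rintro r (rfl | rfl | rfl | rfl | rfl | rfl | rfl | rfl | rfl | rfl) <;>
    simp [hsq, hm, h01, h0m, (hz _).mul_inv_cancel]

/-- The common shape of `Y₀ = repMat (-1) 1 1` and `Y_j(ε, δ) = repMat ε δ (ζ ^ (2 * j))`. -/
noncomputable def repMat (e d a : ℂ) : Gen → Matrix (Fin 2) (Fin 2) ℂ
  | .z => e • 1
  | .s0 => !![d, 0; 0, e * d]
  | .s1 => !![0, a; a⁻¹, 0]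
  | .sm => !![0, 1; 1, 0]

section repMat

variable {e d a : ℂ}

theorem repMat_s0 : repMat e d a .s0 = diagonal ![d, e * d] := by
  ext i j; fin_cases i <;> fin_cases j <;> rfl

theorem repMat_s1_mul_sm : repMat e d a .s1 * repMat e d a .sm = diagonal ![a, a⁻¹] := by
  ext i j; fin_cases i <;> fin_cases j <;> simp [repMat]

theorem repMat_mul_self (he : e * e = 1) (hd : d * d = 1) (ha : a ≠ 0) (g : Gen) :
    repMat e d a g * repMat e d a g = 1 := by
  cases g <;> simp [repMat, one_fin_two, ha, he, hd, mul_mul_mul_comm e d]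

theorem sq_repMat_s0_mul_s1 (hd : d * d = 1) (ha : a ≠ 0) :
    (repMat e d a .s0 * repMat e d a .s1) ^ 2 = repMat e d a .z := by
  have h : d * a * (e * d * a⁻¹) = e := by
    field_simp
    linear_combination e * hd
  simp [repMat, sq, one_fin_two, h, mul_comm (e * d * a⁻¹)]

theorem sq_repMat_s0_mul_sm (hd : d * d = 1) :
    (repMat e d a .s0 * repMat e d a .sm) ^ 2 = repMat e d a .z := by
  simp [repMat, sq, one_fin_two, mul_assoc, mul_left_comm d e, hd]

theorem commute_repMat_z (g : Gen) : Commute (repMat e d a .z) (repMat e d a g) :=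
  (Commute.one_left _).smul_left e

def unitOfMulSelf {M : Type*} [Monoid M] (x : M) (h : x * x = 1) : Mˣ := ⟨x, x, h, h⟩

theorem exists_extends_repMat {m : ℕ} (he : e * e = 1) (hd : d * d = 1) (ha : a ≠ 0)
    (ham : a ^ m = 1) :
    ∃ φ : PresentedGroup (relsOddPos m) →* (Matrix (Fin 2) (Fin 2) ℂ)ˣ,
      Extends φ (repMat e d a) := by
  let u g := unitOfMulSelf _ (repMat_mul_self he hd ha g)
  have hu : ∀ g, (u g : Matrix (Fin 2) (Fin 2) ℂ) = repMat e d a g := fun _ => rfl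
  refine ⟨PresentedGroup.toGroup (relsOddPos_lift_eq_one u ?_ ?_ ?_ ?_ ?_),
    fun g => by rw [PresentedGroup.toGroup.of]; rfl⟩
  · exact fun g => Units.ext <| (sq _).trans (repMat_mul_self he hd ha g)
  · ext1
    simp only [Units.val_pow_eq_pow_val, Units.val_mul, Units.val_one, hu, repMat_s1_mul_sm,
      diagonal_pow, ← diagonal_one]
    congr 1
    ext i
    fin_cases i <;> simp [ham, inv_pow]
  · exact Units.ext (sq_repMat_s0_mul_s1 hd ha)
  · exact Units.ext (sq_repMat_s0_mul_sm (a := a) hd)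
  · exact fun g => Units.ext (commute_repMat_z g)

end repMat

section Irreducible

variable {K : Type*} [Field K] {U : Submodule K (Fin 2 → K)}

theorem single_mem_of_diagonal_mulVec_mem {x y : K} (hxy : x ≠ y)
    (hD : ∀ v ∈ U, diagonal ![x, y] *ᵥ v ∈ U) {v : Fin 2 → K} (hv : v ∈ U) (i : Fin 2) :
    Pi.single i (v i) ∈ U := by
  have h0 : diagonal ![x, y] *ᵥ v - y • v = (x - y) • Pi.single 0 (v 0) := by
    ext k
    fin_cases k <;> simp [sub_mul]
  have h1 : x • v - diagonal ![x, y] *ᵥ v = (x - y) • Pi.single 1 (v 1) := by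
    ext k
    fin_cases k <;> simp [sub_mul]
  rw [← U.smul_mem_iff (sub_ne_zero.2 hxy)]
  fin_cases i
  · exact h0 ▸ U.sub_mem (hD v hv) (U.smul_mem y hv)
  · exact h1 ▸ U.sub_mem (U.smul_mem x hv) (hD v hv)

theorem eq_bot_or_eq_top_of_mulVec_mem {x y : K} (hxy : x ≠ y)
    (hD : ∀ v ∈ U, diagonal ![x, y] *ᵥ v ∈ U) (hS : ∀ v ∈ U, !![0, 1; 1, 0] *ᵥ v ∈ U) :
    U = ⊥ ∨ U = ⊤ := by
  refine or_iff_not_imp_left.2 fun hU => ?_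
  obtain ⟨v, hv, hv0⟩ := U.exists_mem_ne_zero_of_ne_bot hU
  obtain ⟨i, hi⟩ : ∃ i, v i ≠ 0 := by
    by_contra! h
    exact hv0 (funext h)
  have hswap : ∀ j (c : K), !![0, 1; 1, 0] *ᵥ Pi.single j c = Pi.single (Fin.rev j) c := by
    intro j c; ext k; fin_cases j <;> fin_cases k <;> simp
  have hsingle : ∀ j, Pi.single j (v i) ∈ U := by
    have h := single_mem_of_diagonal_mulVec_mem hxy hD hv i
    have hrev : Pi.single i.rev (v i) ∈ U := hswap i (v i) ▸ hS _ h
    intro j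
    obtain rfl | rfl : j = i ∨ j = i.rev := by fin_cases i <;> fin_cases j <;> simp
    exacts [h, hrev]
  have hbasis : Set.range (Pi.basisFun K (Fin 2)) ⊆ U := by
    rintro _ ⟨j, rfl⟩
    simpa [← Pi.single_smul, hi] using U.smul_mem (v i)⁻¹ (hsingle j)
  exact eq_top_iff.2 ((Pi.basisFun K (Fin 2)).span_eq ▸ Submodule.span_le.2 hbasis)

end Irreducible

theorem irredMat_of_extends_repMat {rels : Set (FreeGroup Gen)} {e d a : ℂ}
    {φ : PresentedGroup rels →* (Matrix (Fin 2) (Fin 2) ℂ)ˣ} (hφ : Extends φ (repMat e d a))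
    (h : a ≠ a⁻¹ ∨ d ≠ e * d) : IrredMat φ := by
  intro U hU
  have hS : ∀ v ∈ U, !![0, 1; 1, 0] *ᵥ v ∈ U := fun v hv => by
    simpa [hφ .sm, repMat] using hU (.of .sm) v hv
  rcases h with ha | hd
  · refine eq_bot_or_eq_top_of_mulVec_mem ha (fun v hv => ?_) hS
    simpa [hφ .s1, hφ .sm, repMat_s1_mul_sm] using hU (.of .s1 * .of .sm) v hv
  · refine eq_bot_or_eq_top_of_mulVec_mem hd (fun v hv => ?_) hS
    simpa [hφ .s0, repMat_s0] using hU (.of .s0) v hv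

theorem MatIso.trace_eq {G : Type*} [Group G] {φ ψ : G →* (Matrix (Fin 2) (Fin 2) ℂ)ˣ}
    (h : MatIso φ ψ) (g : G) :
    trace (φ g : Matrix (Fin 2) (Fin 2) ℂ) = trace (ψ g : Matrix (Fin 2) (Fin 2) ℂ) := by
  obtain ⟨S, hS⟩ := h
  rw [hS, Units.val_mul, Units.val_mul, trace_units_conj]

section Traces

variable {rels : Set (FreeGroup Gen)} {e d a : ℂ}
  {φ : PresentedGroup rels →* (Matrix (Fin 2) (Fin 2) ℂ)ˣ}

theorem Extends.trace_z (hφ : Extends φ (repMat e d a)) :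
    trace (φ (.of .z) : Matrix (Fin 2) (Fin 2) ℂ) = 2 * e := by
  simp [hφ .z, repMat, mul_comm]

theorem Extends.trace_s1_mul_sm (hφ : Extends φ (repMat e d a)) :
    trace (φ (.of .s1 * .of .sm) : Matrix (Fin 2) (Fin 2) ℂ) = a + a⁻¹ := by
  simp [hφ .s1, hφ .sm, repMat_s1_mul_sm]

theorem Extends.trace_s0_mul_s1_mul_sm (hφ : Extends φ (repMat e d a)) :
    trace (φ (.of .s0 * (.of .s1 * .of .sm)) : Matrix (Fin 2) (Fin 2) ℂ) = d * (a + e * a⁻¹) := by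
  rw [_root_.map_mul, _root_.map_mul, Units.val_mul, Units.val_mul, hφ .s0, hφ .s1, hφ .sm,
    repMat_s0, repMat_s1_mul_sm, diagonal_mul_diagonal, trace_diagonal, Fin.sum_univ_two]
  simp only [cons_val_zero, cons_val_one]
  ring

end Traces

theorem MatIso.repMat_traces_eq {rels : Set (FreeGroup Gen)} {e d a e' d' a' : ℂ}
    {φ ψ : PresentedGroup rels →* (Matrix (Fin 2) (Fin 2) ℂ)ˣ} (h : MatIso φ ψ)
    (hφ : Extends φ (repMat e d a)) (hψ : Extends ψ (repMat e' d' a')) :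
    e = e' ∧ a + a⁻¹ = a' + a'⁻¹ ∧ d * (a + e * a⁻¹) = d' * (a' + e' * a'⁻¹) := by
  refine ⟨?_, ?_, ?_⟩
  · have h2 := hφ.trace_z.symm.trans ((h.trace_eq _).trans hψ.trace_z)
    linear_combination h2 / 2
  · exact hφ.trace_s1_mul_sm.symm.trans ((h.trace_eq _).trans hψ.trace_s1_mul_sm)
  · exact hφ.trace_s0_mul_s1_mul_sm.symm.trans
      ((h.trace_eq _).trans hψ.trace_s0_mul_s1_mul_sm)

theorem assign_none (m : ℕ) : assign m none = repMat (-1) 1 1 := by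
  funext g
  cases g <;> simp [assign, repMat]

theorem assign_some (m : ℕ) (ε δ : ℂ) (j : ℕ) :
    assign m (some (ε, δ, j)) = repMat ε δ ((zeta m ^ 2) ^ j) := by
  rw [← pow_mul]
  funext g
  cases g <;> rfl

section Assign

variable {p : ℕ} {c c' : Option (ℂ × ℂ × ℕ)} {rels : Set (FreeGroup Gen)}
  {φ ψ : PresentedGroup rels →* (Matrix (Fin 2) (Fin 2) ℂ)ˣ}

theorem exists_extends_assign {m : ℕ} (hm : m ≠ 0) (hc : ValidParam p c) :
    ∃ φ : PresentedGroup (relsOddPos m) →* (Matrix (Fin 2) (Fin 2) ℂ)ˣ,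
      Extends φ (assign m c) := by
  rcases c with _ | ⟨ε, δ, j⟩
  · rw [assign_none]
    exact exists_extends_repMat (by norm_num) (by norm_num) one_ne_zero (one_pow m)
  · obtain ⟨hε, hδ, -, -⟩ := hc
    have hω := isPrimitiveRoot_zeta_sq hm
    rw [assign_some]
    exact exists_extends_repMat (mul_self_eq_one_iff.2 hε) (mul_self_eq_one_iff.2 hδ)
      (pow_ne_zero j (hω.ne_zero hm)) (by rw [pow_right_comm, hω.pow_eq_one, one_pow])

theorem irredMat_of_extends_assign (hc : ValidParam p c)
    (hφ : Extends φ (assign (2 * p + 1) c)) : IrredMat φ := by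
  rcases c with _ | ⟨ε, δ, j⟩
  · rw [assign_none] at hφ
    exact irredMat_of_extends_repMat hφ (Or.inr (by norm_num))
  · obtain ⟨-, -, hj1, hjp⟩ := hc
    rw [assign_some] at hφ
    have h := (isPrimitiveRoot_zeta_sq (by omega)).pow_add_mul_inv_ne_zero hj1 hjp
      (e := -1) (by norm_num)
    exact irredMat_of_extends_repMat hφ (Or.inl fun ha => h (by rw [← ha]; ring))

theorem not_matIso_of_extends_assign (hc : ValidParam p c) (hc' : ValidParam p c')
    (hne : c ≠ c') (hφ : Extends φ (assign (2 * p + 1) c)) (hψ : Extends ψ (assign (2 * p + 1) c')) :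
    ¬ MatIso φ ψ := by
  intro hiso
  have hω := isPrimitiveRoot_zeta_sq (m := 2 * p + 1) (by omega)
  -- `Y₀` has the parameter `a = 1 = (ζ²)⁰`, outside the range `1 ≤ j` of the `Y_j`.
  have hY0 : ∀ {j}, 1 ≤ j → j ≤ p → (zeta _ ^ 2) ^ j + ((zeta _ ^ 2) ^ j)⁻¹ ≠ (1 + 1⁻¹ : ℂ) :=
    fun hj1 hjp h => by
      have := hω.eq_of_pow_add_inv_eq hjp (Nat.zero_le p) (by rwa [pow_zero])
      omega
  rcases c with _ | ⟨ε, δ, j⟩ <;> rcases c' with _ | ⟨ε', δ', j'⟩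
  · exact hne rfl
  · rw [assign_none] at hφ
    rw [assign_some] at hψ
    exact hY0 hc'.2.2.1 hc'.2.2.2 (hiso.repMat_traces_eq hφ hψ).2.1.symm
  · rw [assign_some] at hφ
    rw [assign_none] at hψ
    exact hY0 hc.2.2.1 hc.2.2.2 (hiso.repMat_traces_eq hφ hψ).2.1
  · obtain ⟨hε, -, hj1, hjp⟩ := hc
    rw [assign_some] at hφ hψ
    obtain ⟨rfl, ha, hd⟩ := hiso.repMat_traces_eq hφ hψ
    obtain rfl := hω.eq_of_pow_add_inv_eq hjp hc'.2.2.2 ha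
    obtain rfl := mul_right_cancel₀ (hω.pow_add_mul_inv_ne_zero hj1 hjp (mul_self_eq_one_iff.2 hε)) hd
    exact hne rfl

end Assign

theorem WposOdd_two_dim_irreps_general (m p : ℕ) (hm : m = 2 * p + 1) :
    (∀ c, ValidParam p c →
      ∃ φ : PresentedGroup (relsOddPos m) →* (Matrix (Fin 2) (Fin 2) ℂ)ˣ,
        Extends φ (assign m c)) ∧
    (∀ c, ValidParam p c →
      ∀ φ : PresentedGroup (relsOddPos m) →* (Matrix (Fin 2) (Fin 2) ℂ)ˣ,
        Extends φ (assign m c) → IrredMat φ) ∧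
    (∀ c c', ValidParam p c → ValidParam p c' → c ≠ c' →
      ∀ φ ψ : PresentedGroup (relsOddPos m) →* (Matrix (Fin 2) (Fin 2) ℂ)ˣ,
        Extends φ (assign m c) → Extends ψ (assign m c') → ¬ MatIso φ ψ) := by
  subst hm
  exact ⟨fun _ hc => exists_extends_assign (by omega) hc,
    fun _ hc _ hφ => irredMat_of_extends_assign hc hφ,
    fun _ _ hc hc' hne _ _ hφ hψ => not_matIso_of_extends_assign hc hc' hne hφ hψ⟩

/-- Theorem A.3 of the paper (odd case, positive covering), two-dimensional
representations: for each admissible parameter the prescribed matrix assignment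
respects the defining relations, hence extends to a group homomorphism
`Ŵ⁺ → GL₂(ℂ)`; each resulting representation is irreducible, and representations
with distinct parameters are non-isomorphic. -/
theorem WposOdd_two_dim_irreps (m p : ℕ) (hp : 1 ≤ p) (hm : m = 2 * p + 1) :
    (∀ c, ValidParam p c →
      ∃ φ : PresentedGroup (relsOddPos m) →* (Matrix (Fin 2) (Fin 2) ℂ)ˣ,
        Extends φ (assign m c)) ∧
    (∀ c, ValidParam p c →
      ∀ φ : PresentedGroup (relsOddPos m) →* (Matrix (Fin 2) (Fin 2) ℂ)ˣ,
        Extends φ (assign m c) → IrredMat φ) ∧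
    (∀ c c', ValidParam p c → ValidParam p c' → c ≠ c' →
      ∀ φ ψ : PresentedGroup (relsOddPos m) →* (Matrix (Fin 2) (Fin 2) ℂ)ˣ,
        Extends φ (assign m c) → Extends ψ (assign m c') → ¬ MatIso φ ψ) :=
  WposOdd_two_dim_irreps_general m p hm
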